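/- Let n, p, q be positive natural numbers and λ > 0, μ > 0, α > 0 with α ≥ μ, T ≥ 0, G ≥ 0. Let A, Bw, C, D, M : ℝ → (real matrices of sizes n×n, n×p, q×n, q×p, n×n respectively) be matrix-valued functions, where M(t) is symmetric positive definite for all t ∈ [0,T] and is differentiable with derivative M'(t). Let δx : ℝ → ℝⁿ be differentiable with δx'(t) = A(t)·δx(t) + Bw(t)·δw(t) for a function δw : ℝ → ℝᵖ with ‖δw(t)‖² ≤ G on [0,T], and define δz(t) = C(t)·δx(t) + D(t)·δw(t). Suppose for every t ∈ [0,T]: (i) the block matrix [[M(t)A(t) + A(t)ᵀM(t) + M'(t) + λ·M(t), M(t)Bw(t)], [Bw(t)ᵀM(t), −μ·I_p]] is negative semidefinite, and (ii) the block matrix [[λ·M(t), 0, C(t)ᵀ], [0, (α−μ)·I_p, D(t)ᵀ], [C(t), D(t), α·I_q]] is positive semidefinite. Then for all t ∈ [0,T], ‖δz(t)‖² ≤ α²·G + α·λ·(δx(0)ᵀ M(0) δx(0)). -/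

import Mathlib

open Matrix Set

/-! With the storage function `V t = δx tᵀ M t δx t`, testing LMI (9) against `(δx, δw)` gives the
dissipation inequality `V' + λ V ≤ μ ‖δw‖² ≤ μ G`, so by a comparison argument `V` stays below
`max (V 0) (μ G / λ)`. Testing LMI (10) against `(δx, δw, -δz / α)` completes the square and gives
`‖δz‖² ≤ α (λ V + (α - μ) ‖δw‖²)`; inserting the bound on `V`, the `μ`-terms cancel. -/

/-- The 3×3 block matrix on the index type `Fin n ⊕ (Fin p ⊕ Fin q)`. -/
def blk3 {n p q : ℕ}
    (A11 : Matrix (Fin n) (Fin n) ℝ) (A12 : Matrix (Fin n) (Fin p) ℝ)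
    (A13 : Matrix (Fin n) (Fin q) ℝ)
    (A21 : Matrix (Fin p) (Fin n) ℝ) (A22 : Matrix (Fin p) (Fin p) ℝ)
    (A23 : Matrix (Fin p) (Fin q) ℝ)
    (A31 : Matrix (Fin q) (Fin n) ℝ) (A32 : Matrix (Fin q) (Fin p) ℝ)
    (A33 : Matrix (Fin q) (Fin q) ℝ) :
    Matrix (Fin n ⊕ (Fin p ⊕ Fin q)) (Fin n ⊕ (Fin p ⊕ Fin q)) ℝ :=
  Matrix.fromBlocks A11 (Matrix.of fun i j => Sum.elim (A12 i) (A13 i) j)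
    (Matrix.of fun i j => Sum.elim (fun ip => A21 ip j) (fun iq => A31 iq j) i)
    (Matrix.fromBlocks A22 A23 A32 A33)

section Calculus

variable {m l : Type*} [Fintype m] {t : ℝ}

theorem hasDerivAt_dotProduct {x y : ℝ → m → ℝ} {x' y' : m → ℝ}
    (hx : ∀ i, HasDerivAt (fun s => x s i) (x' i) t)
    (hy : ∀ i, HasDerivAt (fun s => y s i) (y' i) t) :
    HasDerivAt (fun s => x s ⬝ᵥ y s) (x' ⬝ᵥ y t + x t ⬝ᵥ y') t := by
  simp only [dotProduct, ← Finset.sum_add_distrib]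
  exact HasDerivAt.fun_sum fun i _ => (hx i).mul (hy i)

theorem hasDerivAt_mulVec_apply {M : ℝ → Matrix l m ℝ} {M' : Matrix l m ℝ}
    {x : ℝ → m → ℝ} {x' : m → ℝ}
    (hM : ∀ i j, HasDerivAt (fun s => M s i j) (M' i j) t)
    (hx : ∀ j, HasDerivAt (fun s => x s j) (x' j) t) (i : l) :
    HasDerivAt (fun s => (M s *ᵥ x s) i) ((M' *ᵥ x t + M t *ᵥ x') i) t :=
  hasDerivAt_dotProduct (hM i) hx

end Calculus

theorem le_max_of_hasDerivAt_add_mul_le {V V' : ℝ → ℝ} {lam K a b : ℝ} (hlam : 0 < lam)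
    (hV : ∀ t ∈ Icc a b, HasDerivAt V (V' t) t)
    (hV' : ∀ t ∈ Icc a b, V' t + lam * V t ≤ K) :
    ∀ t ∈ Icc a b, V t ≤ max (V a) (K / lam) := by
  set c := K / lam
  have hc : lam * c = K := mul_div_cancel₀ K hlam.ne'
  set W : ℝ → ℝ := fun u => Real.exp (lam * (u - a)) * (V u - c)
  have hW : ∀ u ∈ Icc a b,
      HasDerivAt W (Real.exp (lam * (u - a)) * (V' u + lam * V u - K)) u := by
    intro u hu
    have he : HasDerivAt (fun r => Real.exp (lam * (r - a)))
        (Real.exp (lam * (u - a)) * lam) u := by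
      simpa using (((hasDerivAt_id u).sub_const a).const_mul lam).exp
    exact (he.mul ((hV u hu).sub_const c)).congr_deriv
      (by linear_combination -Real.exp (lam * (u - a)) * hc)
  have hanti : AntitoneOn W (Icc a b) := by
    refine antitoneOn_of_hasDerivWithinAt_nonpos (convex_Icc a b)
      (fun u hu => (hW u hu).continuousAt.continuousWithinAt)
      (fun u hu => (hW u (interior_subset hu)).hasDerivWithinAt) fun u hu => ?_
    have hu := interior_subset hu
    exact mul_nonpos_of_nonneg_of_nonpos (Real.exp_nonneg _) (by linarith [hV' u hu])
  intro t ht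
  have hWt : Real.exp (lam * (t - a)) * (V t - c) ≤ V a - c := by
    simpa [W] using hanti ⟨le_rfl, ht.1.trans ht.2⟩ ht ht.1
  have hexp : 1 ≤ Real.exp (lam * (t - a)) := Real.one_le_exp (by nlinarith [ht.1])
  rcases le_or_gt (V t) c with h | h
  · exact le_max_of_le_right h
  · exact le_max_of_le_left (by nlinarith)

section Blocks

variable {m l : Type*} [Fintype m] [Fintype l]

theorem sumElim_dotProduct_fromBlocks_mulVec (A : Matrix m m ℝ) (B : Matrix m l ℝ)
    (C : Matrix l m ℝ) (D : Matrix l l ℝ) (x : m → ℝ) (y : l → ℝ) :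
    Sum.elim x y ⬝ᵥ (fromBlocks A B C D *ᵥ Sum.elim x y) =
      x ⬝ᵥ (A *ᵥ x) + x ⬝ᵥ (B *ᵥ y) + y ⬝ᵥ (C *ᵥ x) + y ⬝ᵥ (D *ᵥ y) := by
  simp only [fromBlocks_mulVec, Sum.elim_comp_inl, Sum.elim_comp_inr,
    sumElim_dotProduct_sumElim, dotProduct_add]
  ring

theorem dotProduct_mulVec_le_of_posSemidef_neg_fromBlocks [DecidableEq l]
    {M A M' : Matrix m m ℝ} {B : Matrix m l ℝ} {lam mu : ℝ}
    (h : (-(fromBlocks (M * A + Aᵀ * M + M' + lam • M) (M * B) (Bᵀ * M)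
      (-(mu • (1 : Matrix l l ℝ))))).PosSemidef) (x : m → ℝ) (w : l → ℝ) :
    (A *ᵥ x + B *ᵥ w) ⬝ᵥ (M *ᵥ x) + x ⬝ᵥ (M' *ᵥ x + M *ᵥ (A *ᵥ x + B *ᵥ w))
      + lam * (x ⬝ᵥ (M *ᵥ x)) ≤ mu * (w ⬝ᵥ w) := by
  have hq := h.dotProduct_mulVec_nonneg (Sum.elim x w)
  rw [star_trivial, neg_mulVec, dotProduct_neg, sumElim_dotProduct_fromBlocks_mulVec] at hq
  simp only [add_mulVec, mulVec_add, ← mulVec_mulVec, smul_mulVec, neg_mulVec, one_mulVec,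
    dotProduct_add, add_dotProduct, dotProduct_smul, dotProduct_neg, smul_eq_mul,
    dotProduct_mulVec _ (_ᵀ), vecMul_transpose] at hq ⊢
  linarith

end Blocks

section Blk3

variable {n p q : ℕ}

theorem blk3_eq_fromBlocks (A11 : Matrix (Fin n) (Fin n) ℝ) (A12 : Matrix (Fin n) (Fin p) ℝ)
    (A13 : Matrix (Fin n) (Fin q) ℝ)
    (A21 : Matrix (Fin p) (Fin n) ℝ) (A22 : Matrix (Fin p) (Fin p) ℝ)
    (A23 : Matrix (Fin p) (Fin q) ℝ)
    (A31 : Matrix (Fin q) (Fin n) ℝ) (A32 : Matrix (Fin q) (Fin p) ℝ)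
    (A33 : Matrix (Fin q) (Fin q) ℝ) :
    blk3 A11 A12 A13 A21 A22 A23 A31 A32 A33 =
      fromBlocks A11 (fromCols A12 A13) (fromRows A21 A31) (fromBlocks A22 A23 A32 A33) := by
  ext (_ | _ | _) (_ | _ | _) <;> rfl

theorem sumElim_dotProduct_blk3_mulVec (A11 : Matrix (Fin n) (Fin n) ℝ)
    (A12 : Matrix (Fin n) (Fin p) ℝ) (A13 : Matrix (Fin n) (Fin q) ℝ)
    (A21 : Matrix (Fin p) (Fin n) ℝ) (A22 : Matrix (Fin p) (Fin p) ℝ)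
    (A23 : Matrix (Fin p) (Fin q) ℝ)
    (A31 : Matrix (Fin q) (Fin n) ℝ) (A32 : Matrix (Fin q) (Fin p) ℝ)
    (A33 : Matrix (Fin q) (Fin q) ℝ) (x : Fin n → ℝ) (w : Fin p → ℝ) (y : Fin q → ℝ) :
    Sum.elim x (Sum.elim w y) ⬝ᵥ
      (blk3 A11 A12 A13 A21 A22 A23 A31 A32 A33 *ᵥ Sum.elim x (Sum.elim w y)) =
    x ⬝ᵥ (A11 *ᵥ x) + x ⬝ᵥ (A12 *ᵥ w) + x ⬝ᵥ (A13 *ᵥ y) +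
    w ⬝ᵥ (A21 *ᵥ x) + w ⬝ᵥ (A22 *ᵥ w) + w ⬝ᵥ (A23 *ᵥ y) +
    y ⬝ᵥ (A31 *ᵥ x) + y ⬝ᵥ (A32 *ᵥ w) + y ⬝ᵥ (A33 *ᵥ y) := by
  rw [blk3_eq_fromBlocks, sumElim_dotProduct_fromBlocks_mulVec, fromCols_mulVec, fromRows_mulVec,
    sumElim_dotProduct_fromBlocks_mulVec, sumElim_dotProduct_sumElim, dotProduct_add,
    Sum.elim_comp_inl, Sum.elim_comp_inr]
  ring

theorem dotProduct_self_le_of_posSemidef_blk3 {M : Matrix (Fin n) (Fin n) ℝ}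
    {C : Matrix (Fin q) (Fin n) ℝ} {D : Matrix (Fin q) (Fin p) ℝ} {lam mu alp : ℝ}
    (halp : 0 < alp)
    (h : (blk3 (lam • M) 0 Cᵀ 0 ((alp - mu) • (1 : Matrix (Fin p) (Fin p) ℝ)) Dᵀ
      C D (alp • (1 : Matrix (Fin q) (Fin q) ℝ))).PosSemidef)
    (x : Fin n → ℝ) (w : Fin p → ℝ) :
    (C *ᵥ x + D *ᵥ w) ⬝ᵥ (C *ᵥ x + D *ᵥ w) ≤
      alp * (lam * (x ⬝ᵥ (M *ᵥ x)) + (alp - mu) * (w ⬝ᵥ w)) := by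
  set z := C *ᵥ x + D *ᵥ w
  have hq := h.dotProduct_mulVec_nonneg (Sum.elim x (Sum.elim w (-alp⁻¹ • z)))
  rw [star_trivial, sumElim_dotProduct_blk3_mulVec] at hq
  simp only [zero_mulVec, dotProduct_zero, smul_mulVec, one_mulVec, dotProduct_smul,
    smul_dotProduct, smul_eq_mul, dotProduct_mulVec _ (_ᵀ), vecMul_transpose] at hq
  have hz : alp⁻¹ * ((C *ᵥ x) ⬝ᵥ z) + alp⁻¹ * ((D *ᵥ w) ⬝ᵥ z) = alp⁻¹ * (z ⬝ᵥ z) := by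
    rw [← mul_add, ← add_dotProduct]
  have hα : alp * (-alp⁻¹ * (-alp⁻¹ * (z ⬝ᵥ z))) = alp⁻¹ * (z ⬝ᵥ z) := by
    field_simp
  have key : alp⁻¹ * (z ⬝ᵥ z) ≤ lam * (x ⬝ᵥ (M *ᵥ x)) + (alp - mu) * (w ⬝ᵥ w) := by
    rw [dotProduct_comm z (C *ᵥ x), dotProduct_comm z (D *ᵥ w)] at hq
    linarith
  calc z ⬝ᵥ z = alp * (alp⁻¹ * (z ⬝ᵥ z)) := by field_simp
    _ ≤ _ := mul_le_mul_of_nonneg_left key halp.le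

end Blk3

theorem stmt2_general (n p q : ℕ)
    (lam mu alp T G : ℝ) (hlam : 0 < lam) (hmu : 0 < mu) (halp : 0 < alp)
    (hma : mu ≤ alp) (hT : 0 ≤ T) (hG : 0 ≤ G)
    (A : ℝ → Matrix (Fin n) (Fin n) ℝ) (Bw : ℝ → Matrix (Fin n) (Fin p) ℝ)
    (C : ℝ → Matrix (Fin q) (Fin n) ℝ) (D : ℝ → Matrix (Fin q) (Fin p) ℝ)
    (M M' : ℝ → Matrix (Fin n) (Fin n) ℝ)
    (hMpd : ∀ t ∈ Set.Icc (0 : ℝ) T, (M t).PosDef)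
    (hMderiv : ∀ t ∈ Set.Icc (0 : ℝ) T, ∀ i j,
      HasDerivAt (fun s => M s i j) (M' t i j) t)
    (δx : ℝ → Fin n → ℝ) (δw : ℝ → Fin p → ℝ) (δz : ℝ → Fin q → ℝ)
    (hδx : ∀ t ∈ Set.Icc (0 : ℝ) T, ∀ i,
      HasDerivAt (fun s => δx s i) ((A t *ᵥ δx t + Bw t *ᵥ δw t) i) t)
    (hδw : ∀ t ∈ Set.Icc (0 : ℝ) T, (δw t) ⬝ᵥ (δw t) ≤ G)
    (hδz : ∀ t, δz t = C t *ᵥ δx t + D t *ᵥ δw t)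
    (h1 : ∀ t ∈ Set.Icc (0 : ℝ) T,
      (-(Matrix.fromBlocks
          (M t * A t + (A t)ᵀ * M t + M' t + lam • M t) (M t * Bw t)
          ((Bw t)ᵀ * M t) (-(mu • (1 : Matrix (Fin p) (Fin p) ℝ))))).PosSemidef)
    (h2 : ∀ t ∈ Set.Icc (0 : ℝ) T,
      (blk3 (lam • M t) 0 (C t)ᵀ
            0 ((alp - mu) • (1 : Matrix (Fin p) (Fin p) ℝ)) (D t)ᵀ
            (C t) (D t) (alp • (1 : Matrix (Fin q) (Fin q) ℝ))).PosSemidef) :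
    ∀ t ∈ Set.Icc (0 : ℝ) T,
      (δz t) ⬝ᵥ (δz t) ≤ alp ^ 2 * G + alp * lam * ((δx 0) ⬝ᵥ (M 0 *ᵥ δx 0)) := by
  intro t ht
  set V : ℝ → ℝ := fun s => δx s ⬝ᵥ (M s *ᵥ δx s)
  have hV0 : 0 ≤ V 0 := by
    simpa using (hMpd 0 ⟨le_rfl, hT⟩).posSemidef.dotProduct_mulVec_nonneg (δx 0)
  have hVt : V t ≤ max (V 0) (mu * G / lam) :=
    le_max_of_hasDerivAt_add_mul_le hlam
      (fun s hs => hasDerivAt_dotProduct (hδx s hs)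
        (hasDerivAt_mulVec_apply (hMderiv s hs) (hδx s hs)))
      (fun s hs => (dotProduct_mulVec_le_of_posSemidef_neg_fromBlocks (h1 s hs) _ _).trans
        (mul_le_mul_of_nonneg_left (hδw s hs) hmu.le)) t ht
  have hz := dotProduct_self_le_of_posSemidef_blk3 halp (h2 t ht) (δx t) (δw t)
  rw [← hδz] at hz
  calc δz t ⬝ᵥ δz t ≤ alp * (lam * V t + (alp - mu) * (δw t ⬝ᵥ δw t)) := hz
    _ ≤ alp * (lam * (V 0 + mu * G / lam) + (alp - mu) * G) := by
      have hma' : 0 ≤ alp - mu := sub_nonneg.2 hma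
      have hc : 0 ≤ mu * G / lam := by positivity
      gcongr
      · exact hVt.trans (max_le (by linarith) (by linarith))
      · exact hδw t ht
    _ = alp ^ 2 * G + alp * lam * V 0 := by
      field_simp
      ring

/-- Time-varying linear-systems form of Lemma 1: the pointwise LMI conditions (9)–(10)
along a trajectory imply the differential L∞-gain bound
‖δz(t)‖² ≤ α²G + αλ·δx(0)ᵀM(0)δx(0) on [0,T]. -/
theorem stmt2 (n p q : ℕ) (hn : 0 < n) (hp : 0 < p) (hq : 0 < q)
    (lam mu alp T G : ℝ) (hlam : 0 < lam) (hmu : 0 < mu) (halp : 0 < alp)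
    (hma : mu ≤ alp) (hT : 0 ≤ T) (hG : 0 ≤ G)
    (A : ℝ → Matrix (Fin n) (Fin n) ℝ) (Bw : ℝ → Matrix (Fin n) (Fin p) ℝ)
    (C : ℝ → Matrix (Fin q) (Fin n) ℝ) (D : ℝ → Matrix (Fin q) (Fin p) ℝ)
    (M M' : ℝ → Matrix (Fin n) (Fin n) ℝ)
    (hMpd : ∀ t ∈ Set.Icc (0 : ℝ) T, (M t).PosDef)
    (hMderiv : ∀ t ∈ Set.Icc (0 : ℝ) T, ∀ i j,
      HasDerivAt (fun s => M s i j) (M' t i j) t)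
    (δx : ℝ → Fin n → ℝ) (δw : ℝ → Fin p → ℝ) (δz : ℝ → Fin q → ℝ)
    (hδx : ∀ t ∈ Set.Icc (0 : ℝ) T, ∀ i,
      HasDerivAt (fun s => δx s i) ((A t *ᵥ δx t + Bw t *ᵥ δw t) i) t)
    (hδw : ∀ t ∈ Set.Icc (0 : ℝ) T, (δw t) ⬝ᵥ (δw t) ≤ G)
    (hδz : ∀ t, δz t = C t *ᵥ δx t + D t *ᵥ δw t)
    (h1 : ∀ t ∈ Set.Icc (0 : ℝ) T,
      (-(Matrix.fromBlocks
          (M t * A t + (A t)ᵀ * M t + M' t + lam • M t) (M t * Bw t)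
          ((Bw t)ᵀ * M t) (-(mu • (1 : Matrix (Fin p) (Fin p) ℝ))))).PosSemidef)
    (h2 : ∀ t ∈ Set.Icc (0 : ℝ) T,
      (blk3 (lam • M t) 0 (C t)ᵀ
            0 ((alp - mu) • (1 : Matrix (Fin p) (Fin p) ℝ)) (D t)ᵀ
            (C t) (D t) (alp • (1 : Matrix (Fin q) (Fin q) ℝ))).PosSemidef) :
    ∀ t ∈ Set.Icc (0 : ℝ) T,
      (δz t) ⬝ᵥ (δz t) ≤ alp ^ 2 * G + alp * lam * ((δx 0) ⬝ᵥ (M 0 *ᵥ δx 0)) :=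
  stmt2_general n p q lam mu alp T G hlam hmu halp hma hT hG A Bw C D M M' hMpd hMderiv δx δw δz hδx
    hδw hδz h1 h2
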